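/- Let α > 0, β > 0, and ξ ∈ ℝ with |ξ| > 1; set ε = 1 if ξ < -1 and ε = -1 if ξ > 1. Let n ∈ ℕ and assume P_n^{(α-1,β-1)}(ξ) ≠ 0 and P_{n+1}^{(α-1,β-1)}(ξ) ≠ 0 (which holds since all zeros of Jacobi polynomials lie in (-1,1)). Let P_n(·,ξ) be the real polynomial satisfying (X - ξ)·P_n(X,ξ) = P_{n+1}^{(α-1,β-1)}(X) - (P_{n+1}^{(α-1,β-1)}(ξ)/P_n^{(α-1,β-1)}(ξ))·P_n^{(α-1,β-1)}(X). Then P_n(·,ξ) is monic of degree n, ∫_{-1}^1 q(x)·P_n(x,ξ)·ε(x-ξ)·(1-x)^{α-1}(1+x)^{β-1} dx = 0 for every real polynomial q of degree at most n-1, and ∫_{-1}^1 P_n(x,ξ)²·ε(x-ξ)·(1-x)^{α-1}(1+x)^{β-1} dx = -ε·k_n^{(α-1,β-1)}·P_{n+1}^{(α-1,β-1)}(ξ)/P_n^{(α-1,β-1)}(ξ). -/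

import Mathlib

open Polynomial MeasureTheory

/-- The monic Jacobi polynomial `P_n^{(α,β)}`. -/
noncomputable def jacobiP (α β : ℝ) (n : ℕ) : Polynomial ℝ :=
  ∑ m ∈ Finset.range (n + 1),
    Polynomial.C ((2 : ℝ) ^ n * (Real.Gamma (α + n + 1) / Real.Gamma (α + β + 2 * n + 1)) *
      (n.choose m) * (Real.Gamma (α + β + n + m + 1) / Real.Gamma (α + m + 1)) *
      ((1 : ℝ) / 2) ^ m) * (Polynomial.X - 1) ^ m

/-- The squared norm `k_n^{(α,β)}` of the monic Jacobi polynomial. -/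
noncomputable def knorm (α β : ℝ) (n : ℕ) : ℝ :=
  (2 : ℝ) ^ (2 * (n : ℝ) + α + β + 1) * n.factorial * Real.Gamma ((n : ℝ) + α + 1) *
    Real.Gamma ((n : ℝ) + β + 1) * Real.Gamma ((n : ℝ) + α + β + 1) /
    ((2 * (n : ℝ) + α + β + 1) * Real.Gamma (2 * (n : ℝ) + α + β + 1) ^ 2)

/-!
Write `a = α - 1`, `b = β - 1`, `w(x) = (1 - x)^a (1 + x)^b`, `J_k` for the monic Jacobi polynomials
and `c = J_{n+1}(ξ) / J_n(ξ)`. Multiplying by `ε (x - ξ)` turns `P` into `ε (J_{n+1} - c J_n)`, so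
both integrals are combinations of `∫ q J_k w`. Orthogonality of `J_k` to lower degrees leaves
`-ε c ∫ P J_n w`, and as `P` is monic of degree `n` this is `-ε c k_n`.

Orthogonality and the norm come from the expansion of `J_n` in powers of `x - 1`: the Beta integral
turns `∫ (x - 1)^j J_n w` into an alternating binomial sum `∑ₘ (-1)^m C(n, m) f(m)`, an `n`-th
finite difference. For `j < n`, `f` is a polynomial of degree `< n`, so the sum vanishes; for
`j = n`, `f(m) = p(m) / (m + a + b + n + 1)` with `p` of degree `n`, and partial fractions evaluate
it.
-/

open Set fwdDiff

section Beta

variable {u v : ℝ}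

lemma integral_rpow_mul_one_sub_rpow (hu : -1 < u) (hv : -1 < v) :
    ∫ t in (0 : ℝ)..1, t ^ u * (1 - t) ^ v =
      Real.Gamma (u + 1) * Real.Gamma (v + 1) / Real.Gamma (u + v + 2) := by
  have hβ : Complex.betaIntegral (u + 1 : ℝ) (v + 1 : ℝ) =
      ((∫ t in (0 : ℝ)..1, t ^ u * (1 - t) ^ v : ℝ) : ℂ) := by
    rw [Complex.betaIntegral, ← intervalIntegral.integral_ofReal]
    refine intervalIntegral.integral_congr fun t ht => ?_
    rw [uIcc_of_le zero_le_one] at ht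
    push_cast
    rw [add_sub_cancel_right, add_sub_cancel_right, Complex.ofReal_cpow ht.1,
      ← Complex.ofReal_one, ← Complex.ofReal_sub, Complex.ofReal_cpow (sub_nonneg.2 ht.2)]
  have hΓ := Complex.betaIntegral_eq_Gamma_mul_div (u + 1 : ℝ) (v + 1 : ℝ)
    (by simp; linarith) (by simp; linarith)
  rw [hβ, ← Complex.ofReal_add, Complex.Gamma_ofReal, Complex.Gamma_ofReal,
    Complex.Gamma_ofReal, show u + 1 + (v + 1) = u + v + 2 by ring] at hΓ
  exact_mod_cast hΓ

end Beta

section Weight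

variable {a b : ℝ}

lemma intervalIntegrable_one_sub_rpow_mul_one_add_rpow (ha : -1 < a) (hb : -1 < b) :
    IntervalIntegrable (fun x : ℝ => (1 - x) ^ a * (1 + x) ^ b) volume (-1) 1 := by
  have left : IntervalIntegrable (fun x : ℝ => (1 - x) ^ a * (1 + x) ^ b) volume (-1) 0 := by
    have h : IntervalIntegrable (fun x : ℝ => (1 + x) ^ b) volume (-1) 0 := by
      simpa [add_comm] using
        (intervalIntegral.intervalIntegrable_rpow' (a := 0) (b := 1) hb).comp_add_right 1
    refine (h.continuousOn_mul (ContinuousOn.rpow_const (by fun_prop) fun x hx => ?_))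
    rw [uIcc_of_le (by norm_num)] at hx
    exact Or.inl (by linarith [hx.2])
  have right : IntervalIntegrable (fun x : ℝ => (1 - x) ^ a * (1 + x) ^ b) volume 0 1 := by
    have h : IntervalIntegrable (fun x : ℝ => (1 - x) ^ a) volume 0 1 := by
      simpa using
        ((intervalIntegral.intervalIntegrable_rpow' (a := 0) (b := 1) ha).comp_sub_left 1).symm
    refine (h.mul_continuousOn (ContinuousOn.rpow_const (by fun_prop) fun x hx => ?_))
    rw [uIcc_of_le (by norm_num)] at hx
    exact Or.inl (by linarith [hx.1])
  exact left.trans right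

lemma integrableOn_one_sub_rpow_mul_one_add_rpow (ha : -1 < a) (hb : -1 < b) :
    IntegrableOn (fun x : ℝ => (1 - x) ^ a * (1 + x) ^ b) (Ioo (-1) 1) :=
  (intervalIntegrable_one_sub_rpow_mul_one_add_rpow ha hb).1.mono_set Ioo_subset_Ioc_self

lemma integral_one_sub_rpow_mul_one_add_rpow (ha : -1 < a) (hb : -1 < b) :
    ∫ x in Ioo (-1 : ℝ) 1, (1 - x) ^ a * (1 + x) ^ b =
      2 ^ (a + b + 1) * Real.Gamma (a + 1) * Real.Gamma (b + 1) / Real.Gamma (a + b + 2) := by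
  have hsub := intervalIntegral.integral_comp_mul_add (a := 0) (b := 1)
    (fun x : ℝ => (1 - x) ^ a * (1 + x) ^ b) (two_ne_zero' ℝ) (-1)
  rw [show (2 : ℝ) * 0 + -1 = -1 by norm_num, show (2 : ℝ) * 1 + -1 = 1 by norm_num,
    smul_eq_mul] at hsub
  have hscale : EqOn (fun t : ℝ => (1 - (2 * t + -1)) ^ a * (1 + (2 * t + -1)) ^ b)
      (fun t => 2 ^ a * 2 ^ b * (t ^ b * (1 - t) ^ a)) (uIcc 0 1) := fun t ht => by
    rw [uIcc_of_le zero_le_one] at ht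
    dsimp only
    rw [show 1 - (2 * t + -1) = 2 * (1 - t) by ring, show 1 + (2 * t + -1) = 2 * t by ring,
      Real.mul_rpow zero_le_two (by linarith [ht.2]), Real.mul_rpow zero_le_two ht.1]
    ring
  rw [← integral_Ioc_eq_integral_Ioo, ← intervalIntegral.integral_of_le (by norm_num),
    ← mul_right_inj' (inv_ne_zero (two_ne_zero' ℝ)), ← hsub,
    intervalIntegral.integral_congr hscale, intervalIntegral.integral_const_mul,
    integral_rpow_mul_one_sub_rpow hb ha, Real.rpow_add two_pos, Real.rpow_add two_pos,
    show b + a + 2 = a + b + 2 by ring]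
  ring

end Weight

noncomputable def jacobiMoment (a b : ℝ) (p : ℝ[X]) : ℝ :=
  ∫ x in Ioo (-1 : ℝ) 1, p.eval x * ((1 - x) ^ a * (1 + x) ^ b)

section Moment

variable {a b : ℝ}

lemma integrableOn_eval_mul_one_sub_rpow_mul_one_add_rpow (ha : -1 < a) (hb : -1 < b)
    (p : ℝ[X]) :
    IntegrableOn (fun x => p.eval x * ((1 - x) ^ a * (1 + x) ^ b)) (Ioo (-1) 1) :=
  (integrableOn_one_sub_rpow_mul_one_add_rpow ha hb).continuousOn_mul_of_subset
    p.continuous.continuousOn isCompact_Icc measurableSet_Ioo Ioo_subset_Icc_self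

lemma jacobiMoment_C_mul (c : ℝ) (p : ℝ[X]) :
    jacobiMoment a b (C c * p) = c * jacobiMoment a b p := by
  simp only [jacobiMoment, eval_mul, eval_C, mul_assoc, integral_const_mul]

lemma jacobiMoment_sub (ha : -1 < a) (hb : -1 < b) (p q : ℝ[X]) :
    jacobiMoment a b (p - q) = jacobiMoment a b p - jacobiMoment a b q := by
  simp only [jacobiMoment, eval_sub, sub_mul]
  exact integral_sub (integrableOn_eval_mul_one_sub_rpow_mul_one_add_rpow ha hb p)
    (integrableOn_eval_mul_one_sub_rpow_mul_one_add_rpow ha hb q)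

lemma jacobiMoment_sum {ι : Type*} (ha : -1 < a) (hb : -1 < b) (s : Finset ι)
    (p : ι → ℝ[X]) :
    jacobiMoment a b (∑ i ∈ s, p i) = ∑ i ∈ s, jacobiMoment a b (p i) := by
  simp only [jacobiMoment, eval_finsetSum, Finset.sum_mul]
  exact integral_finsetSum s fun i _ =>
    integrableOn_eval_mul_one_sub_rpow_mul_one_add_rpow ha hb (p i)

lemma jacobiMoment_X_sub_one_pow (ha : -1 < a) (hb : -1 < b) (k : ℕ) :
    jacobiMoment a b ((X - 1) ^ k) =
      (-2) ^ k * 2 ^ (a + b + 1) * Real.Gamma (a + k + 1) * Real.Gamma (b + 1) /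
        Real.Gamma (a + b + k + 2) := by
  have hak : -1 < a + k := by linarith [k.cast_nonneg (α := ℝ)]
  have hpow : EqOn (fun x : ℝ => (X - 1 : ℝ[X]).eval x ^ k * ((1 - x) ^ a * (1 + x) ^ b))
      (fun x => (-1) ^ k * ((1 - x) ^ (a + k) * (1 + x) ^ b)) (Ioo (-1) 1) := fun x hx => by
    simp only [eval_sub, eval_X, eval_one]
    rw [Real.rpow_add (by linarith [hx.2]), Real.rpow_natCast, show x - 1 = -1 * (1 - x) by ring,
      mul_pow]
    ring
  simp only [jacobiMoment, eval_pow]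
  rw [setIntegral_congr_fun measurableSet_Ioo hpow, integral_const_mul,
    integral_one_sub_rpow_mul_one_add_rpow hak hb, show a + k + b + 1 = a + b + 1 + k by ring,
    Real.rpow_add two_pos, Real.rpow_natCast, show a + k + b + 2 = a + b + k + 2 by ring,
    show (-2 : ℝ) ^ k = (-1) ^ k * 2 ^ k by rw [← mul_pow]; norm_num]
  ring

end Moment

section FiniteDifferences

lemma sum_neg_one_pow_mul_choose_mul_eq_fwdDiff_iter (f : ℝ → ℝ) (n : ℕ) :
    ∑ m ∈ Finset.range (n + 1), (-1) ^ m * n.choose m * f m = (-1) ^ n * (Δ_[1])^[n] f 0 := by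
  rw [fwdDiff_iter_eq_sum_shift, Finset.mul_sum]
  refine Finset.sum_congr rfl fun m hm => ?_
  obtain ⟨d, rfl⟩ := Nat.exists_eq_add_of_le (Finset.mem_range_succ_iff.1 hm)
  rw [Nat.add_sub_cancel_left, zsmul_eq_mul, nsmul_eq_mul, mul_one, zero_add]
  have hsq : ((-1 : ℝ) ^ d) ^ 2 = 1 := by rw [← pow_mul, pow_mul']; norm_num
  push_cast
  linear_combination -((-1 : ℝ) ^ m * (m + d).choose m * f m) * hsq

lemma sum_neg_one_pow_mul_choose_mul_eval_eq_zero {p : ℝ[X]} {n : ℕ} (hp : p.degree < n) :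
    ∑ m ∈ Finset.range (n + 1), (-1) ^ m * n.choose m * p.eval (m : ℝ) = 0 := by
  rcases eq_or_ne p 0 with rfl | hp0
  · simp
  rw [sum_neg_one_pow_mul_choose_mul_eq_fwdDiff_iter p.eval,
    fwdDiff_iter_eq_zero_of_degree_lt ((natDegree_lt_iff_degree_lt hp0).2 hp), Pi.zero_apply,
    mul_zero]

lemma ascPochhammer_eval_ne_zero {y : ℝ} (hy : ∀ k : ℕ, y ≠ -k) (n : ℕ) :
    (ascPochhammer ℝ n).eval y ≠ 0 := by
  rw [ne_eq, ascPochhammer_eval_eq_zero_iff]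
  rintro ⟨k, -, hk⟩
  exact hy k (by rw [hk, neg_neg])

lemma fwdDiff_iter_inv (n : ℕ) {y : ℝ} (hy : ∀ k : ℕ, y ≠ -k) :
    (Δ_[1])^[n] (fun x : ℝ => x⁻¹) y =
      (-1) ^ n * n.factorial / (ascPochhammer ℝ (n + 1)).eval y := by
  induction n generalizing y with
  | zero => simp
  | succ n ih =>
    have hy1 : ∀ k : ℕ, y + 1 ≠ -k := fun k h => hy (k + 1) (by push_cast; linarith)
    have hleft : (ascPochhammer ℝ (n + 2)).eval y = y * (ascPochhammer ℝ (n + 1)).eval (y + 1) := by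
      rw [ascPochhammer_succ_left, eval_mul, eval_X, eval_comp, eval_add, eval_X, eval_one]
    have hright : (ascPochhammer ℝ (n + 2)).eval y =
        (ascPochhammer ℝ (n + 1)).eval y * (y + (n + 1 : ℕ)) :=
      ascPochhammer_succ_eval (n + 1) y
    have h0 := ascPochhammer_eval_ne_zero hy (n + 1)
    have h1 := ascPochhammer_eval_ne_zero hy1 (n + 1)
    rw [Function.iterate_succ_apply', fwdDiff, ih hy1, ih hy]
    rw [div_sub_div _ _ h1 h0, div_eq_div_iff (mul_ne_zero h1 h0)
      (ascPochhammer_eval_ne_zero hy (n + 2))]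
    push_cast [Nat.factorial_succ] at hright ⊢
    linear_combination (-1) ^ n * n.factorial * ((ascPochhammer ℝ (n + 1)).eval y * hleft -
      (ascPochhammer ℝ (n + 1)).eval (y + 1) * hright)

lemma sum_neg_one_pow_mul_choose_div_add (n : ℕ) {s : ℝ} (hs : ∀ k : ℕ, s ≠ -k) :
    ∑ m ∈ Finset.range (n + 1), (-1) ^ m * n.choose m / (s + m) =
      n.factorial / (ascPochhammer ℝ (n + 1)).eval s := by
  have h := sum_neg_one_pow_mul_choose_mul_eq_fwdDiff_iter (fun x => (x + s)⁻¹) n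
  rw [fwdDiff_iter_comp_add, zero_add, fwdDiff_iter_inv n hs] at h
  simp_rw [div_eq_mul_inv, add_comm s]
  rw [h, div_eq_mul_inv, ← mul_assoc, ← mul_assoc, ← pow_add, Even.neg_one_pow ⟨n, rfl⟩,
    one_mul]

lemma sum_neg_one_pow_mul_choose_mul_eval_div_add {p : ℝ[X]} {n : ℕ} (hp : p.degree ≤ n) {s : ℝ}
    (hs : ∀ k : ℕ, s ≠ -k) :
    ∑ m ∈ Finset.range (n + 1), (-1) ^ m * n.choose m * (p.eval (m : ℝ) / (s + m)) =
      p.eval (-s) * n.factorial / (ascPochhammer ℝ (n + 1)).eval s := by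
  set q := p /ₘ (X - C (-s))
  have hq : q.degree < n := by
    rcases eq_or_ne p 0 with rfl | hp0
    · simp [q]
    · exact (degree_divByMonic_lt _ _ hp0 (by rw [degree_X_sub_C]; exact zero_lt_one)).trans_le hp
  have hpq : ∀ x, p.eval x = (x + s) * q.eval x + p.eval (-s) := fun x => by
    conv_lhs => rw [← modByMonic_add_div p (X - C (-s)), modByMonic_X_sub_C_eq_C_eval]
    simp only [eval_add, eval_C, eval_mul, eval_sub, eval_X, sub_neg_eq_add]
    ring
  have hterm : ∀ m : ℕ, (-1) ^ m * n.choose m * (p.eval (m : ℝ) / (s + m)) =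
      (-1) ^ m * n.choose m * q.eval (m : ℝ) + p.eval (-s) * ((-1) ^ m * n.choose m / (s + m)) :=
    fun m => by
      have hsm : s + m ≠ 0 := fun h => hs m (by linarith)
      rw [hpq, add_comm (m : ℝ) s]
      field_simp
  rw [Finset.sum_congr rfl fun m _ => hterm m, Finset.sum_add_distrib,
    sum_neg_one_pow_mul_choose_mul_eval_eq_zero hq, zero_add, ← Finset.mul_sum,
    sum_neg_one_pow_mul_choose_div_add n hs, mul_div_assoc]

end FiniteDifferences

lemma Real.Gamma_add_nat_eq_mul_ascPochhammer {x : ℝ} (hx : ∀ k : ℕ, x ≠ -k) (n : ℕ) :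
    Real.Gamma (x + n) = Real.Gamma x * (ascPochhammer ℝ n).eval x := by
  induction n with
  | zero => simp
  | succ n ih =>
    have hxn : x + n ≠ 0 := fun h => hx n (by linarith)
    rw [Nat.cast_succ, ← add_assoc, Real.Gamma_add_one hxn, ih, ascPochhammer_succ_eval]
    ring

lemma ne_neg_natCast_of_neg_one_lt {x : ℝ} (h₁ : -1 < x) (h₀ : x ≠ 0) (k : ℕ) : x ≠ -k := by
  rcases k with _ | k
  · simpa using h₀
  · push_cast; linarith

section DegreeLT

variable {R : Type*} [Ring R] [Nontrivial R]

lemma sum_C_mul_X_sub_one_pow_mem_degreeLT (c : ℕ → R) (n : ℕ) :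
    ∑ m ∈ Finset.range n, C (c m) * (X - 1) ^ m ∈ degreeLT R n :=
  Submodule.sum_mem _ fun m hm => by
    rw [← smul_eq_C_mul]
    refine Submodule.smul_mem _ _ (mem_degreeLT.2 ((degree_pow_le _ _).trans_lt ?_))
    rw [← C_1, degree_X_sub_C, nsmul_one]
    exact_mod_cast Finset.mem_range.1 hm

lemma isMonicOfDegree_X_sub_one_pow (n : ℕ) : IsMonicOfDegree ((X - 1 : R[X]) ^ n) n := by
  simpa only [map_one, one_mul] using (isMonicOfDegree_X_sub_one (1 : R)).pow n

lemma Polynomial.IsMonicOfDegree.of_sub_mem_degreeLT {p q : R[X]} {n : ℕ}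
    (hq : IsMonicOfDegree q n) (h : p - q ∈ degreeLT R n) : IsMonicOfDegree p n := by
  have hlt : (p - q).degree < q.degree := by
    rw [degree_eq_natDegree hq.ne_zero, hq.natDegree_eq]
    exact mem_degreeLT.1 h
  rw [← add_sub_cancel q p]
  exact ⟨(natDegree_add_eq_left_of_degree_lt hlt).trans hq.natDegree_eq,
    hq.monic.add_of_left hlt⟩

lemma Polynomial.IsMonicOfDegree.sub_mem_degreeLT {p q : R[X]} {n : ℕ}
    (hp : IsMonicOfDegree p n) (hq : IsMonicOfDegree q n) : p - q ∈ degreeLT R n := by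
  have hpd : p.degree = n := by rw [degree_eq_natDegree hp.ne_zero, hp.natDegree_eq]
  rw [mem_degreeLT, ← hpd]
  exact degree_sub_lt_left (by rw [hpd, degree_eq_natDegree hq.ne_zero, hq.natDegree_eq])
    hp.ne_zero (by rw [hp.leadingCoeff_eq, hq.leadingCoeff_eq])

end DegreeLT

section JacobiP

variable {a b : ℝ}

lemma jacobiP_mem_degreeLT (a b : ℝ) (n : ℕ) : jacobiP a b n ∈ degreeLT ℝ (n + 1) :=
  sum_C_mul_X_sub_one_pow_mem_degreeLT _ _

lemma jacobiP_sub_X_sub_one_pow_mem_degreeLT {n : ℕ} (h₁ : Real.Gamma (a + n + 1) ≠ 0)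
    (h₂ : Real.Gamma (a + b + 2 * n + 1) ≠ 0) :
    jacobiP a b n - (X - 1) ^ n ∈ degreeLT ℝ n := by
  have hlead : (2 : ℝ) ^ n * (Real.Gamma (a + n + 1) / Real.Gamma (a + b + 2 * n + 1)) *
      (n.choose n) * (Real.Gamma (a + b + n + n + 1) / Real.Gamma (a + n + 1)) *
      ((1 : ℝ) / 2) ^ n = 1 := by
    rw [Nat.choose_self, Nat.cast_one, show a + b + n + n + 1 = a + b + 2 * n + 1 by ring,
      one_div, inv_pow]
    generalize Real.Gamma (a + b + 2 * n + 1) = G at h₂ ⊢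
    field_simp
  rw [jacobiP, Finset.sum_range_succ, hlead, C_1, one_mul, add_sub_cancel_right]
  exact sum_C_mul_X_sub_one_pow_mem_degreeLT _ n

lemma isMonicOfDegree_jacobiP {n : ℕ} (h₁ : Real.Gamma (a + n + 1) ≠ 0)
    (h₂ : Real.Gamma (a + b + 2 * n + 1) ≠ 0) : IsMonicOfDegree (jacobiP a b n) n :=
  (isMonicOfDegree_X_sub_one_pow n).of_sub_mem_degreeLT
    (jacobiP_sub_X_sub_one_pow_mem_degreeLT h₁ h₂)

lemma add_add_two_mul_add_one_ne_zero_of_jacobiP_ne_zero (ha : -1 < a) (hb : -1 < b) {n : ℕ}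
    (h : jacobiP a b n ≠ 0) : a + b + 2 * n + 1 ≠ 0 := by
  rcases n.eq_zero_or_pos with rfl | hn
  · exact fun hab => h (by simp [jacobiP, by simpa using hab])
  · have : (1 : ℝ) ≤ n := by exact_mod_cast hn
    linarith

lemma isMonicOfDegree_jacobiP_succ_sub_C_mul (ha : -1 < a) (hb : -1 < b) (n : ℕ) (c : ℝ) :
    IsMonicOfDegree (jacobiP a b (n + 1) - C c * jacobiP a b n) (n + 1) := by
  have hJ : IsMonicOfDegree (jacobiP a b (n + 1)) (n + 1) := by
    refine isMonicOfDegree_jacobiP (Real.Gamma_pos_of_pos ?_).ne' (Real.Gamma_pos_of_pos ?_).ne'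
    all_goals push_cast; linarith [n.cast_nonneg (α := ℝ)]
  refine hJ.of_sub_mem_degreeLT ?_
  rw [sub_sub_cancel_left, ← smul_eq_C_mul]
  exact Submodule.neg_mem _ (Submodule.smul_mem _ _ (jacobiP_mem_degreeLT a b n))

end JacobiP

section Orthogonality

variable {a b : ℝ}

lemma jacobiMoment_X_sub_one_pow_mul_jacobiP (ha : -1 < a) (hb : -1 < b) (j n : ℕ) :
    jacobiMoment a b ((X - 1) ^ j * jacobiP a b n) =
      2 ^ n * Real.Gamma (a + n + 1) / Real.Gamma (a + b + 2 * n + 1) * (-2) ^ j *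
        2 ^ (a + b + 1) * Real.Gamma (b + 1) *
        ∑ m ∈ Finset.range (n + 1), (-1) ^ m * n.choose m *
          ((ascPochhammer ℝ j).eval (a + m + 1) * Real.Gamma (a + b + n + m + 1) /
            Real.Gamma (a + b + j + m + 2)) := by
  rw [jacobiP, Finset.mul_sum, jacobiMoment_sum ha hb, Finset.mul_sum]
  refine Finset.sum_congr rfl fun m _ => ?_
  have ham : 0 < a + m + 1 := by linarith [m.cast_nonneg (α := ℝ)]
  have hΓ : Real.Gamma (a + (j + m : ℕ) + 1) =
      Real.Gamma (a + m + 1) * (ascPochhammer ℝ j).eval (a + m + 1) := by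
    rw [show a + ((j + m : ℕ) : ℝ) + 1 = a + m + 1 + j by push_cast; ring]
    exact Real.Gamma_add_nat_eq_mul_ascPochhammer
      (ne_neg_natCast_of_neg_one_lt (by linarith) ham.ne') j
  rw [mul_left_comm, ← pow_add, jacobiMoment_C_mul, jacobiMoment_X_sub_one_pow ha hb, hΓ,
    show a + b + ((j + m : ℕ) : ℝ) + 2 = a + b + j + m + 2 by push_cast; ring,
    pow_add, show (-2 : ℝ) ^ m = (-1) ^ m * 2 ^ m by rw [← mul_pow]; norm_num, one_div, inv_pow]
  field_simp [(Real.Gamma_pos_of_pos ham).ne']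

lemma jacobiMoment_X_sub_one_pow_mul_jacobiP_of_lt (ha : -1 < a) (hb : -1 < b) {j n : ℕ}
    (hjn : j < n) : jacobiMoment a b ((X - 1) ^ j * jacobiP a b n) = 0 := by
  obtain ⟨k, rfl⟩ := Nat.exists_eq_add_of_lt hjn
  -- the summand is a polynomial in `m` of degree `j + k < n`
  set p : ℝ[X] := (ascPochhammer ℝ j).comp (X + C (a + 1)) *
    (ascPochhammer ℝ k).comp (X + C (a + b + j + 2))
  have hp : p.degree < (j + k + 1 : ℕ) := by
    have h : p.natDegree ≤ _ :=
      natDegree_mul_le.trans (_root_.add_le_add natDegree_comp_le natDegree_comp_le)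
    simp only [ascPochhammer_natDegree, natDegree_X_add_C, mul_one] at h
    exact degree_le_natDegree.trans_lt (by exact_mod_cast Nat.lt_succ_of_le h)
  have hterm : ∀ m : ℕ, (ascPochhammer ℝ j).eval (a + m + 1) *
      Real.Gamma (a + b + (j + k + 1 : ℕ) + m + 1) / Real.Gamma (a + b + j + m + 2) =
        p.eval (m : ℝ) := fun m => by
    have hpos : 0 < a + b + j + m + 2 := by
      linarith [j.cast_nonneg (α := ℝ), m.cast_nonneg (α := ℝ)]
    rw [show a + b + ((j + k + 1 : ℕ) : ℝ) + m + 1 = a + b + j + m + 2 + k by push_cast; ring,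
      Real.Gamma_add_nat_eq_mul_ascPochhammer
        (ne_neg_natCast_of_neg_one_lt (by linarith) hpos.ne')]
    simp only [p, eval_mul, eval_comp, eval_add, eval_X, eval_C]
    rw [show (m : ℝ) + (a + 1) = a + m + 1 by ring,
      show (m : ℝ) + (a + b + j + 2) = a + b + j + m + 2 by ring]
    field_simp [(Real.Gamma_pos_of_pos hpos).ne']
  rw [jacobiMoment_X_sub_one_pow_mul_jacobiP ha hb, Finset.sum_congr rfl fun m _ => by rw [hterm m],
    sum_neg_one_pow_mul_choose_mul_eval_eq_zero hp, mul_zero]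

lemma sum_neg_one_pow_mul_choose_mul_ascPochhammer_div (a b : ℝ) (n : ℕ)
    (hs : ∀ k : ℕ, a + b + n + 1 ≠ -k) :
    ∑ m ∈ Finset.range (n + 1), (-1) ^ m * n.choose m *
      ((ascPochhammer ℝ n).eval (a + m + 1) / (a + b + n + 1 + m)) =
        (-1) ^ n * (ascPochhammer ℝ n).eval (b + 1) * n.factorial /
          (ascPochhammer ℝ (n + 1)).eval (a + b + n + 1) := by
  set p : ℝ[X] := (ascPochhammer ℝ n).comp (X + C (a + 1))
  have hp : p.degree ≤ n := degree_le_of_natDegree_le <| natDegree_comp_le.trans <| by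
    rw [ascPochhammer_natDegree, natDegree_X_add_C, mul_one]
  have hpeval : p.eval (-(a + b + n + 1)) = (-1) ^ n * (ascPochhammer ℝ n).eval (b + 1) := by
    simp only [p, eval_comp, eval_add, eval_X, eval_C]
    rw [show -(a + b + n + 1) + (a + 1) = -(b + n) by ring,
      ascPochhammer_eval_neg_eq_descPochhammer, descPochhammer_eval_eq_ascPochhammer,
      show b + n - n + 1 = b + 1 by ring]
  rw [← hpeval, ← sum_neg_one_pow_mul_choose_mul_eval_div_add hp hs]
  refine Finset.sum_congr rfl fun m _ => ?_
  simp only [p, eval_comp, eval_add, eval_X, eval_C]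
  rw [show (m : ℝ) + (a + 1) = a + m + 1 by ring]

lemma jacobiMoment_X_sub_one_pow_mul_jacobiP_self (ha : -1 < a) (hb : -1 < b) {n : ℕ}
    (hn : a + b + 2 * n + 1 ≠ 0) :
    jacobiMoment a b ((X - 1) ^ n * jacobiP a b n) = knorm a b n := by
  set s := a + b + n + 1 with hs_def
  have hs : ∀ k : ℕ, s ≠ -k := by
    refine ne_neg_natCast_of_neg_one_lt (by linarith [n.cast_nonneg (α := ℝ)]) fun h => hn ?_
    rcases n.eq_zero_or_pos with rfl | hn0
    · simpa [hs_def] using h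
    · have : (1 : ℝ) ≤ n := by exact_mod_cast hn0
      linarith
  have hterm : ∀ m : ℕ, (ascPochhammer ℝ n).eval (a + m + 1) *
      Real.Gamma (a + b + n + m + 1) / Real.Gamma (a + b + n + m + 2) =
        (ascPochhammer ℝ n).eval (a + m + 1) / (s + m) := fun m => by
    have hsm : s + m ≠ 0 := fun h => hs m (by linarith)
    have hΓ : Real.Gamma (s + m) ≠ 0 := Real.Gamma_ne_zero fun k h => hs (k + m) (by
      push_cast; linarith)
    rw [show a + b + n + m + 2 = s + m + 1 by ring, Real.Gamma_add_one hsm,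
      show a + b + n + m + 1 = s + m by ring]
    field_simp
  have hasc_b := Real.Gamma_add_nat_eq_mul_ascPochhammer
    (ne_neg_natCast_of_neg_one_lt (by linarith) (by linarith : 0 < b + 1).ne') n
  have hasc_s := Real.Gamma_add_nat_eq_mul_ascPochhammer hs (n + 1)
  rw [show s + (n + 1 : ℕ) = a + b + 2 * n + 1 + 1 by push_cast; ring,
    Real.Gamma_add_one hn] at hasc_s
  have hΓs : Real.Gamma s ≠ 0 := Real.Gamma_ne_zero hs
  have hA : (ascPochhammer ℝ (n + 1)).eval s ≠ 0 := ascPochhammer_eval_ne_zero hs _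
  have hΓ : Real.Gamma (a + b + 2 * n + 1) ≠ 0 :=
    right_ne_zero_of_mul (hasc_s ▸ mul_ne_zero hΓs hA)
  have hsign : (-2 : ℝ) ^ n * (-1) ^ n = 2 ^ n := by rw [← mul_pow]; norm_num
  rw [jacobiMoment_X_sub_one_pow_mul_jacobiP ha hb,
    Finset.sum_congr rfl fun m _ => by rw [hterm m],
    sum_neg_one_pow_mul_choose_mul_ascPochhammer_div a b n hs, ← hs_def, knorm,
    show 2 * (n : ℝ) + a + b + 1 = a + b + 2 * n + 1 by ring,
    show (n : ℝ) + a + 1 = a + n + 1 by ring, show (n : ℝ) + b + 1 = b + 1 + n by ring,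
    show (n : ℝ) + a + b + 1 = s by ring,
    show (2 : ℝ) ^ (a + b + 2 * n + 1) = 2 ^ n * 2 ^ n * 2 ^ (a + b + 1) by
      rw [← Real.rpow_natCast, ← Real.rpow_add two_pos, ← Real.rpow_add two_pos]; congr 1; ring,
    hasc_b, sq, ← mul_assoc (a + b + 2 * n + 1), hasc_s]
  field_simp
  linear_combination Real.Gamma (a + n + 1) * Real.Gamma (b + 1) *
    (ascPochhammer ℝ n).eval (b + 1) / Real.Gamma (a + b + n * 2 + 1) * hsign

lemma jacobiMoment_mul_jacobiP_eq_zero (ha : -1 < a) (hb : -1 < b) {q : ℝ[X]} {n : ℕ}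
    (hq : q.degree < n) : jacobiMoment a b (q * jacobiP a b n) = 0 := by
  rcases eq_or_ne q 0 with rfl | hq0
  · simp [jacobiMoment]
  have hqn : (taylor 1 q).natDegree < n := by
    rwa [natDegree_taylor, natDegree_lt_iff_degree_lt hq0]
  conv_lhs => rw [← sum_taylor_eq q 1, Polynomial.sum_def]
  rw [Finset.sum_mul, jacobiMoment_sum ha hb]
  refine Finset.sum_eq_zero fun i hi => ?_
  rw [mul_assoc, jacobiMoment_C_mul, C_1, jacobiMoment_X_sub_one_pow_mul_jacobiP_of_lt ha hb
    ((le_natDegree_of_mem_supp i hi).trans_lt hqn), mul_zero]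

lemma jacobiMoment_mul_jacobiP_of_isMonicOfDegree (ha : -1 < a) (hb : -1 < b) {P : ℝ[X]}
    {n : ℕ} (hP : IsMonicOfDegree P n) (hn : a + b + 2 * n + 1 ≠ 0) :
    jacobiMoment a b (P * jacobiP a b n) = knorm a b n := by
  have h := jacobiMoment_mul_jacobiP_eq_zero ha hb
    (mem_degreeLT.1 (hP.sub_mem_degreeLT (isMonicOfDegree_X_sub_one_pow n)))
  rwa [sub_mul, jacobiMoment_sub ha hb, jacobiMoment_X_sub_one_pow_mul_jacobiP_self ha hb hn,
    sub_eq_zero] at h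

end Orthogonality

theorem stmt15_general (α β ξ ε : ℝ) (hα : 0 < α) (hβ : 0 < β) (n : ℕ)
    (h1 : (jacobiP (α - 1) (β - 1) n).eval ξ ≠ 0)
    (P : Polynomial ℝ)
    (hP : (Polynomial.X - Polynomial.C ξ) * P =
      jacobiP (α - 1) (β - 1) (n + 1) -
        Polynomial.C ((jacobiP (α - 1) (β - 1) (n + 1)).eval ξ /
            (jacobiP (α - 1) (β - 1) n).eval ξ) * jacobiP (α - 1) (β - 1) n) :
    P.Monic ∧ P.natDegree = n ∧
    (∀ q : Polynomial ℝ, q.degree < n →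
      ∫ x in Set.Ioo (-1 : ℝ) 1,
        q.eval x * P.eval x * (ε * (x - ξ)) * (1 - x) ^ (α - 1) * (1 + x) ^ (β - 1) = 0) ∧
    ∫ x in Set.Ioo (-1 : ℝ) 1,
        (P.eval x) ^ 2 * (ε * (x - ξ)) * (1 - x) ^ (α - 1) * (1 + x) ^ (β - 1) =
      -(ε * knorm (α - 1) (β - 1) n *
        (jacobiP (α - 1) (β - 1) (n + 1)).eval ξ / (jacobiP (α - 1) (β - 1) n).eval ξ) := by
  have ha : -1 < α - 1 := by linarith
  have hb : -1 < β - 1 := by linarith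
  have hn := add_add_two_mul_add_one_ne_zero_of_jacobiP_ne_zero ha hb fun h => h1 (by
    rw [h, eval_zero])
  set J := jacobiP (α - 1) (β - 1)
  set c := (J (n + 1)).eval ξ / (J n).eval ξ
  have hXP : IsMonicOfDegree ((X - C ξ) * P) (1 + n) := by
    rw [hP, add_comm 1 n]
    exact isMonicOfDegree_jacobiP_succ_sub_C_mul ha hb n c
  have hPn : IsMonicOfDegree P n := (isMonicOfDegree_X_sub_one ξ).of_mul_left hXP
  have key : ∀ q : ℝ[X], ∫ x in Set.Ioo (-1 : ℝ) 1,
      q.eval x * P.eval x * (ε * (x - ξ)) * (1 - x) ^ (α - 1) * (1 + x) ^ (β - 1) =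
        ε * (jacobiMoment (α - 1) (β - 1) (q * J (n + 1)) -
          c * jacobiMoment (α - 1) (β - 1) (q * J n)) := fun q => by
    rw [← jacobiMoment_C_mul, mul_left_comm, ← jacobiMoment_sub ha hb, ← mul_sub, ← hP,
      jacobiMoment, ← integral_const_mul]
    congr 1 with x
    simp only [eval_mul, eval_sub, eval_X, eval_C]
    ring
  have hn1 : (n : WithBot ℕ) < (n + 1 : ℕ) := by exact_mod_cast n.lt_succ_self
  refine ⟨hPn.monic, hPn.natDegree_eq, fun q hq => ?_, ?_⟩
  · rw [key, jacobiMoment_mul_jacobiP_eq_zero ha hb (hq.trans hn1),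
      jacobiMoment_mul_jacobiP_eq_zero ha hb hq]
    ring
  · simp only [sq]
    rw [key, jacobiMoment_mul_jacobiP_eq_zero ha hb
        ((degree_le_of_natDegree_le hPn.natDegree_eq.le).trans_lt hn1),
      jacobiMoment_mul_jacobiP_of_isMonicOfDegree ha hb hPn hn]
    ring

theorem stmt15 (α β ξ ε : ℝ) (hα : 0 < α) (hβ : 0 < β) (hξ : 1 < |ξ|)
    (hε : ε = if ξ < -1 then 1 else -1) (n : ℕ)
    (h1 : (jacobiP (α - 1) (β - 1) n).eval ξ ≠ 0)
    (h2 : (jacobiP (α - 1) (β - 1) (n + 1)).eval ξ ≠ 0)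
    (P : Polynomial ℝ)
    (hP : (Polynomial.X - Polynomial.C ξ) * P =
      jacobiP (α - 1) (β - 1) (n + 1) -
        Polynomial.C ((jacobiP (α - 1) (β - 1) (n + 1)).eval ξ /
            (jacobiP (α - 1) (β - 1) n).eval ξ) * jacobiP (α - 1) (β - 1) n) :
    P.Monic ∧ P.natDegree = n ∧
    (∀ q : Polynomial ℝ, q.degree < n →
      ∫ x in Set.Ioo (-1 : ℝ) 1,
        q.eval x * P.eval x * (ε * (x - ξ)) * (1 - x) ^ (α - 1) * (1 + x) ^ (β - 1) = 0) ∧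
    ∫ x in Set.Ioo (-1 : ℝ) 1,
        (P.eval x) ^ 2 * (ε * (x - ξ)) * (1 - x) ^ (α - 1) * (1 + x) ^ (β - 1) =
      -(ε * knorm (α - 1) (β - 1) n *
        (jacobiP (α - 1) (β - 1) (n + 1)).eval ξ / (jacobiP (α - 1) (β - 1) n).eval ξ) :=
  stmt15_general α β ξ ε hα hβ n h1 P hP
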